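/- Suppose that either (1) (Poly-R₁) and HK^h_B hold, or (2) (Poly-∞) and HK^h_U hold, and suppose d₁ > α₂(β₂∧1), where d₁ is the lower volume-doubling exponent, α₂ the upper scaling index of Φ, and β₂ the upper index in (Poly-R₁). Then there exists a constant C≥1 such that for all x,y∈D, C^{−1} h(Φ(ρ(x,y)),x,y) ψ(ρ(x,y))/V(x,ρ(x,y)) ≤ G̃_D(x,y) ≤ C h(Φ(ρ(x,y)),x,y) ψ(ρ(x,y))/V(x,ρ(x,y)), where G̃_D(x,y):=∫_{Φ(ρ(x,y))}^{2Φ(diam D)} h(s,x,y)/( s V(x,Φ^{−1}(s)) φ(1/s) ) ds (with 2Φ(diam D) interpreted as ∞ when D is unbounded) and ψ(r):=1/φ(1/Φ(r)). -/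

import Mathlib

open MeasureTheory Real Set
open scoped ENNReal

/-- Tail of the Lévy measure: `w(r) = ν((r,∞))`. -/
noncomputable def levyTail (ν : Measure ℝ) (r : ℝ) : ℝ := (ν (Set.Ioi r)).toReal

/-- Laplace exponent `φ(λ) = ∫ (1 - e^{-λ s}) ν(ds)`. -/
noncomputable def laplaceExp (ν : Measure ℝ) (lam : ℝ) : ℝ :=
  ∫ s, (1 - Real.exp (-(lam * s))) ∂ν

/-- Condition (Poly-R₁); (Poly-∞) is the case `R₁ = ⊤`. -/
def PolyCond (ν : Measure ℝ) (R₁ : ℝ≥0∞) (c c' β₁ β₂ : ℝ) : Prop :=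
  ∀ r R : ℝ, 0 < r → r ≤ R → ENNReal.ofReal R < R₁ →
    c * (R / r) ^ β₁ ≤ levyTail ν r / levyTail ν R ∧
      levyTail ν r / levyTail ν R ≤ c' * (R / r) ^ β₂

/-- `ν` is the Lévy measure of a driftless subordinator. -/
structure IsLevyMeasure (ν : Measure ℝ) : Prop where
  supp : ν (Set.Iic 0) = 0
  tail_fin : ∀ r : ℝ, 0 < r → ν (Set.Ioi r) < ⊤
  integ : IntegrableOn (fun s => s) (Set.Ioc (0:ℝ) 1) ν

/-- `μ t` is the law of `S_t` for the driftless subordinator with Lévy measure `ν`. -/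
structure IsSubordinatorLaw (ν : Measure ℝ) (μ : ℝ → Measure ℝ) : Prop where
  levy : IsLevyMeasure ν
  prob : ∀ t : ℝ, 0 < t → IsProbabilityMeasure (μ t)
  nonneg : ∀ t : ℝ, 0 < t → μ t (Set.Iio 0) = 0
  laplace : ∀ t lam : ℝ, 0 < t → 0 ≤ lam →
    (∫ s, Real.exp (-(lam * s)) ∂(μ t)) = Real.exp (-(t * laplaceExp ν lam))

/-- `H(λ) = φ(λ) - λ φ'(λ)`. -/
noncomputable def Hfun (ν : Measure ℝ) (lam : ℝ) : ℝ :=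
  laplaceExp ν lam - lam * deriv (laplaceExp ν) lam

/-- `σ(t,s) = (φ')⁻¹(s/t)` if `s/t < φ'(0+)`, and `σ(t,s) = 0` otherwise. -/
def IsSigmaFun (ν : Measure ℝ) (σ : ℝ → ℝ → ℝ) : Prop :=
  ∀ t s : ℝ, 0 < t → 0 < s →
    ((∃ lam : ℝ, 0 < lam ∧ s / t < deriv (laplaceExp ν) lam) →
      0 < σ t s ∧ deriv (laplaceExp ν) (σ t s) = s / t) ∧
    ((∀ lam : ℝ, 0 < lam → deriv (laplaceExp ν) lam ≤ s / t) → σ t s = 0)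

/-- `φInv` is the inverse of the Laplace exponent `φ` on `(0,∞)`. -/
def IsPhiInv (ν : Measure ℝ) (φInv : ℝ → ℝ) : Prop :=
  ∀ u : ℝ, 0 < u → 0 < φInv u ∧ laplaceExp ν (φInv u) = u

/-- `HInv` is the inverse of `H` on `(0,∞)`. -/
def IsHInv (ν : Measure ℝ) (HInv : ℝ → ℝ) : Prop :=
  ∀ u : ℝ, 0 < u → 0 < HInv u ∧ Hfun ν (HInv u) = u

open Metric

/-- `V(x,r) = m(B(x,r))`. -/
noncomputable def vol {E : Type*} [PseudoMetricSpace E] [MeasurableSpace E] (m : Measure E) (x : E) (r : ℝ) : ℝ :=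
  (m (Metric.ball x r)).toReal

/-- Volume doubling and reverse doubling with exponents `d₁ ≤ d₂` and
localization radius `R_E`. -/
def VolDoubling {E : Type*} [PseudoMetricSpace E] [MeasurableSpace E] (m : Measure E) (R_E : ℝ≥0∞)
    (d₁ d₂ : ℝ) : Prop :=
  ∀ a : ℝ, 1 ≤ a → ∃ CV : ℝ, 1 ≤ CV ∧ ∀ (x : E) (r R : ℝ), 0 < r → r ≤ R →
    ENNReal.ofReal R < ENNReal.ofReal a * R_E →
    CV⁻¹ * (R / r) ^ d₁ ≤ vol m x R / vol m x r ∧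
      vol m x R / vol m x r ≤ CV * (R / r) ^ d₂

/-- Global weak scaling condition with indices `α₁ ≤ α₂`. -/
def WeakScaling (Φ : ℝ → ℝ) (c c' α₁ α₂ : ℝ) : Prop :=
  ∀ r R : ℝ, 0 < r → r ≤ R →
    c * (R / r) ^ α₁ ≤ Φ R / Φ r ∧ Φ R / Φ r ≤ c' * (R / r) ^ α₂

/-- `h` is a boundary function on `D`: it takes values in `[0,1]`, satisfies (H1)
(non-increasing in time) and (H2) with constant `cH` and exponent `γ` below the
time horizon `T` (`T = ⊤` for unbounded `D`). -/
def IsBoundaryFunction {E : Type*} (D : Set E) (h : ℝ → E → E → ℝ) (T : ℝ≥0∞)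
    (cH γ : ℝ) : Prop :=
  (∀ (t : ℝ) (x y : E), 0 < t → x ∈ D → y ∈ D → h t x y ∈ Set.Icc (0:ℝ) 1) ∧
  (∀ (x y : E), x ∈ D → y ∈ D → ∀ s t : ℝ, 0 < s → s ≤ t → h t x y ≤ h s x y) ∧
  (∀ (x y : E), x ∈ D → y ∈ D → ∀ s t : ℝ, 0 < s → s ≤ t → ENNReal.ofReal t < T →
    s ^ γ * h s x y ≤ cH * (t ^ γ * h t x y))

/-- Two-sided estimate (3.4) for the heat kernel `p_D` of `Y^D`, holding for all times
`t` with `0 < t` satisfying `tcond t`. -/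
def HKest {E : Type*} [PseudoMetricSpace E] [MeasurableSpace E] (m : Measure E) (D : Set E)
    (Ψ ΦInv : ℝ → ℝ) (h pD : ℝ → E → E → ℝ)
    (C₀ cl cexl cu cexu : ℝ) (tcond : ℝ → Prop) : Prop :=
  ∀ (t : ℝ) (x y : E), 0 < t → tcond t → x ∈ D → y ∈ D →
    cl * h t x y * min ((vol m x (ΦInv t))⁻¹)
        (C₀ * t / (vol m x (dist x y) * Ψ (dist x y)) +
          (vol m x (ΦInv t))⁻¹ * Real.exp (-(cexl * dist x y ^ 2 / ΦInv t ^ 2)))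
      ≤ pD t x y ∧
    pD t x y ≤ cu * h t x y * min ((vol m x (ΦInv t))⁻¹)
        (C₀ * t / (vol m x (dist x y) * Ψ (dist x y)) +
          (vol m x (ΦInv t))⁻¹ * Real.exp (-(cexu * dist x y ^ 2 / ΦInv t ^ 2)))

/-- Large-time estimate (3.5): `p_D(t,x,y) ≍ e^{-λ_D t} h(1,x,y)` for `t ≥ 1`. -/
def HKlarge {E : Type*} (D : Set E) (h pD : ℝ → E → E → ℝ) (lamD c₅ c₆ : ℝ) : Prop :=
  ∀ (t : ℝ) (x y : E), 1 ≤ t → x ∈ D → y ∈ D →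
    c₅ * Real.exp (-(lamD * t)) * h 1 x y ≤ pD t x y ∧
      pD t x y ≤ c₆ * Real.exp (-(lamD * t)) * h 1 x y

/-- Heat kernel `q(t,x,y) = ∫ p_D(s,x,y) P(S_t ∈ ds)` of the subordinate process. -/
noncomputable def subq {E : Type*} (μ : ℝ → Measure ℝ) (pD : ℝ → E → E → ℝ)
    (t : ℝ) (x y : E) : ℝ :=
  ∫ s, pD s x y ∂(μ t)

/-- Jump kernel `J(x,y) = ∫ p_D(s,x,y) ν(ds)` of the subordinate process. -/
noncomputable def subJ {E : Type*} (ν : Measure ℝ) (pD : ℝ → E → E → ℝ) (x y : E) : ℝ :=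
  ∫ s, pD s x y ∂ν

/-- Green function `G_D(x,y) = ∫_0^∞ q(t,x,y) dt` of the subordinate process. -/
noncomputable def subG {E : Type*} (μ : ℝ → Measure ℝ) (pD : ℝ → E → E → ℝ)
    (x y : E) : ℝ :=
  ∫ t in Set.Ioi (0:ℝ), subq μ pD t x y

/-- `ψ(r) = 1/φ(1/Φ(r))`. -/
noncomputable def psiFun (ν : Measure ℝ) (Φ : ℝ → ℝ) (r : ℝ) : ℝ :=
  (laplaceExp ν ((Φ r)⁻¹))⁻¹

/-- `𝔅_h(t,x,y) = ∫_{2/φ⁻¹(1/t)}^{4Φ(ρ(x,y))} h(s,x,y) w(s) ds`. -/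
noncomputable def sB {E : Type*} [PseudoMetricSpace E] [MeasurableSpace E] (ν : Measure ℝ)
    (h : ℝ → E → E → ℝ) (Φ φInv : ℝ → ℝ) (t : ℝ) (x y : E) : ℝ :=
  ∫ s in Set.Ioc (2 * (φInv (t⁻¹))⁻¹) (4 * Φ (dist x y)), h s x y * levyTail ν s

/-- Hypotheses of case (1): (Poly-R₁) holds and `HK^h_B` holds. -/
def BddCaseHyp {E : Type*} [PseudoMetricSpace E] [MeasurableSpace E] (m : Measure E) (D : Set E)
    (Φ Ψ ΦInv : ℝ → ℝ) (h pD : ℝ → E → E → ℝ) (ν : Measure ℝ)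
    (R₁ : ℝ≥0∞) (cw cw' β₁ β₂ cH γ C₀ cl cexl cu cexu : ℝ) : Prop :=
  PolyCond ν R₁ cw cw' β₁ β₂ ∧
  Bornology.IsBounded D ∧
  ENNReal.ofReal (8 * Φ (Metric.diam D)) < R₁ ∧
  IsBoundaryFunction D h (ENNReal.ofReal (4 * Φ (Metric.diam D) + 1)) cH γ ∧
  HKest m D Ψ ΦInv h pD C₀ cl cexl cu cexu (fun t => t ≤ 1) ∧
  ∃ lamD c₅ c₆ : ℝ, 0 < lamD ∧ 0 < c₅ ∧ 0 < c₆ ∧ HKlarge D h pD lamD c₅ c₆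

/-- Hypotheses of case (2): (Poly-∞) holds and `HK^h_U` holds (with `R_E = ⊤`). -/
def UnbddCaseHyp {E : Type*} [PseudoMetricSpace E] [MeasurableSpace E] (m : Measure E) (D : Set E)
    (Ψ ΦInv : ℝ → ℝ) (h pD : ℝ → E → E → ℝ) (ν : Measure ℝ)
    (R_E : ℝ≥0∞) (cw cw' β₁ β₂ cH γ C₀ cl cexl cu cexu : ℝ) : Prop :=
  PolyCond ν ⊤ cw cw' β₁ β₂ ∧
  R_E = ⊤ ∧
  IsBoundaryFunction D h ⊤ cH γ ∧
  HKest m D Ψ ΦInv h pD C₀ cl cexl cu cexu (fun _ => True)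

/-- On-diagonal expression `h(1/φ⁻¹(1/t),x,y) / V(x, ψ⁻¹(t))`. -/
noncomputable def onDiag {E : Type*} [PseudoMetricSpace E] [MeasurableSpace E] (m : Measure E)
    (h : ℝ → E → E → ℝ) (ΦInv φInv : ℝ → ℝ) (t : ℝ) (x y : E) : ℝ :=
  h ((φInv (t⁻¹))⁻¹) x y / vol m x (ΦInv ((φInv (t⁻¹))⁻¹))

/-- Off-diagonal expression in Theorem 4.2(ii), with constant `c` in the exponential. -/
noncomputable def offDiag {E : Type*} [PseudoMetricSpace E] [MeasurableSpace E] (ν : Measure ℝ)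
    (m : Measure E) (h : ℝ → E → E → ℝ) (Φ Ψ ΦInv φInv : ℝ → ℝ)
    (C₀ c t : ℝ) (x y : E) : ℝ :=
  C₀ / (vol m x (dist x y) * Ψ (dist x y)) *
      (t * sB ν h Φ φInv t x y + h ((φInv (t⁻¹))⁻¹) x y / φInv (t⁻¹)) +
    h ((φInv (t⁻¹))⁻¹) x y / vol m x (ΦInv ((φInv (t⁻¹))⁻¹)) *
      Real.exp (-(c * dist x y ^ 2 / ΦInv ((φInv (t⁻¹))⁻¹) ^ 2)) +
    h (Φ (dist x y)) x y * (t * levyTail ν (Φ (dist x y))) / vol m x (dist x y)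

/-!
Write `ρ = ρ(x,y)`, `a = Φ(ρ)`, `M = h(a,x,y) ψ(ρ) / V(x,ρ)` and `F` for the integrand of `G̃_D`.
On `(a, 2a]`, (H1), (H2), volume doubling and the monotonicity of `φ` give `F ≳ M / a`, so
`G̃_D ≳ M`. For `s > a`, the upper scaling of `Φ` and reverse volume doubling give
`V(x, Φ⁻¹(s)) ≳ (s/a)^{d₁/α₂} V(x,ρ)`, while (Poly-R₁) gives `φ(1/s) ≳ (a/s)^{β₂∧1} φ(1/a)`.
Hence `F(s) ≲ M a^δ s^{-1-δ}` with `δ = d₁/α₂ - β₂∧1 > 0`, and integrating gives `G̃_D ≲ M / δ`.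
-/

namespace IsLevyMeasure

variable {ν : Measure ℝ} (hν : IsLevyMeasure ν)
include hν

theorem ae_pos : ∀ᵐ u ∂ν, 0 < u := by
  rw [ae_iff]
  simp only [not_lt]
  exact hν.supp

theorem restrict_Ioi_zero : ν.restrict (Ioi 0) = ν :=
  Measure.restrict_eq_self_of_ae_mem hν.ae_pos

theorem integrableOn_id_Ioc (R : ℝ) : IntegrableOn (fun u => u) (Ioc 0 R) ν := by
  rcases le_or_gt R 1 with hR | hR
  · exact hν.integ.mono_set (Ioc_subset_Ioc_right hR)
  rw [← Ioc_union_Ioc_eq_Ioc zero_le_one hR.le]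
  refine hν.integ.union (Integrable.mono' (g := fun _ => R) ?_ (by fun_prop) ?_)
  · exact integrableOn_const
      ((measure_mono Ioc_subset_Ioi_self).trans_lt (hν.tail_fin 1 one_pos)).ne
  · filter_upwards [ae_restrict_mem measurableSet_Ioc] with u hu
    rw [Real.norm_of_nonneg (zero_le_one.trans hu.1.le)]
    exact hu.2

theorem integrable_one_sub_exp {lam : ℝ} (hlam : 0 ≤ lam) :
    Integrable (fun u => 1 - exp (-(lam * u))) ν := by
  rw [← hν.restrict_Ioi_zero, ← Ioc_union_Ioi_eq_Ioi zero_le_one]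
  refine IntegrableOn.union ?_ ?_
  · refine Integrable.mono' (hν.integ.const_mul lam) (by fun_prop) ?_
    filter_upwards [ae_restrict_mem measurableSet_Ioc] with u hu
    have hx : 0 ≤ lam * u := mul_nonneg hlam hu.1.le
    rw [Real.norm_of_nonneg (sub_nonneg.2 (exp_le_one_iff.2 (neg_nonpos.2 hx)))]
    linarith [one_sub_le_exp_neg (lam * u)]
  · refine Integrable.mono' (g := fun _ => 1) (integrableOn_const (hν.tail_fin 1 one_pos).ne)
      (by fun_prop) ?_
    filter_upwards [ae_restrict_mem measurableSet_Ioi] with u hu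
    have hx : 0 ≤ lam * u := mul_nonneg hlam (zero_le_one.trans (le_of_lt hu))
    rw [Real.norm_of_nonneg (sub_nonneg.2 (exp_le_one_iff.2 (neg_nonpos.2 hx)))]
    linarith [exp_pos (-(lam * u))]

theorem monotoneOn_laplaceExp : MonotoneOn (laplaceExp ν) (Ici 0) := by
  intro lam hlam lam' hlam' h
  refine integral_mono_ae (hν.integrable_one_sub_exp hlam) (hν.integrable_one_sub_exp hlam') ?_
  filter_upwards [hν.ae_pos] with u hu
  have : -(lam' * u) ≤ -(lam * u) := by nlinarith
  linarith [exp_le_exp.2 this]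

theorem antitoneOn_laplaceExp_inv : AntitoneOn (fun s => laplaceExp ν s⁻¹) (Ioi 0) :=
  fun _ hs _ ht hst => hν.monotoneOn_laplaceExp (mem_Ici.2 (inv_pos.2 ht).le)
    (mem_Ici.2 (inv_pos.2 hs).le) (inv_anti₀ hs hst)

/-- `1 - e^{-x}` is concave and vanishes at `0`, so its slopes from the origin decrease. -/
theorem mul_laplaceExp_le {mu lam : ℝ} (hmu : 0 < mu) (h : mu ≤ lam) :
    mu * laplaceExp ν lam ≤ lam * laplaceExp ν mu := by
  have hlam : 0 < lam := hmu.trans_le h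
  rw [laplaceExp, laplaceExp, ← integral_const_mul, ← integral_const_mul]
  refine integral_mono_ae ((hν.integrable_one_sub_exp hlam.le).const_mul mu)
    ((hν.integrable_one_sub_exp hmu.le).const_mul lam) ?_
  filter_upwards [hν.ae_pos] with u hu
  have hconv := convexOn_exp.2 (mem_univ (-(lam * u))) (mem_univ 0)
    (div_nonneg hmu.le hlam.le) (sub_nonneg.2 ((div_le_one hlam).2 h)) (by ring)
  have hmix : (mu / lam) • -(lam * u) + (1 - mu / lam) • (0 : ℝ) = -(mu * u) := by
    simp only [smul_eq_mul, mul_zero, add_zero]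
    field_simp
  rw [hmix, exp_zero, smul_eq_mul, smul_eq_mul] at hconv
  have := mul_le_mul_of_nonneg_left hconv hlam.le
  field_simp at this
  linarith

theorem levyTail_le_laplaceExp_inv {r : ℝ} (hr : 0 < r) :
    (1 - exp (-1)) * levyTail ν r ≤ laplaceExp ν r⁻¹ := by
  have hint := hν.integrable_one_sub_exp (inv_pos.2 hr).le
  calc (1 - exp (-1)) * levyTail ν r
      ≤ ∫ u in Ioi r, (1 - exp (-(r⁻¹ * u))) ∂ν := by
        refine setIntegral_ge_of_const_le_real measurableSet_Ioi (hν.tail_fin r hr).ne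
          (fun u hu => ?_) hint.integrableOn
        have : 1 ≤ r⁻¹ * u := by rw [le_inv_mul_iff₀ hr, mul_one]; exact le_of_lt hu
        linarith [exp_le_exp.2 (neg_le_neg this)]
    _ ≤ laplaceExp ν r⁻¹ := by
        refine setIntegral_le_integral hint ?_
        filter_upwards [hν.ae_pos] with u hu
        exact sub_nonneg.2 (exp_le_one_iff.2 (neg_nonpos.2 (by positivity)))

/-- Layer cake: `∫_{(0,R]} u ν(du) ≤ ∫_0^R w(t) dt`, and the tail bound makes the right side
`≲ R w(R)` as long as `b < 1`. -/
theorem setIntegral_id_Ioc_le {R c b : ℝ} (hR : 0 < R) (hb : b < 1)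
    (hP : ∀ t, 0 < t → t ≤ R → levyTail ν t ≤ c * (R / t) ^ b * levyTail ν R) :
    ∫ u in Ioc 0 R, u ∂ν ≤ c * levyTail ν R * R / (1 - b) := by
  set g : ℝ → ℝ := fun t => c * levyTail ν R * R ^ b * t ^ (-b)
  have hg : IntegrableOn g (Ioc 0 R) := by
    refine Integrable.const_mul ?_ _
    exact (intervalIntegrable_iff_integrableOn_Ioc_of_le hR.le).1
      (intervalIntegral.intervalIntegrable_rpow' (by linarith))
  have hlayer : ∀ t ∈ Ioi (0 : ℝ),
      (ν.restrict (Ioc 0 R)).real {u | t < u} ≤ (Ioc 0 R).indicator g t := by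
    intro t ht
    rcases le_or_gt t R with htR | hRt
    · rw [indicator_of_mem (show t ∈ Ioc 0 R from ⟨ht, htR⟩)]
      calc (ν.restrict (Ioc 0 R)).real {u | t < u} ≤ levyTail ν t :=
            ENNReal.toReal_mono (hν.tail_fin t ht).ne (Measure.restrict_apply_le _ _)
        _ ≤ g t := by
            refine (hP t ht htR).trans_eq ?_
            simp only [g, div_rpow hR.le (le_of_lt ht), rpow_neg (le_of_lt ht)]
            ring
    · have : {u | t < u} ∩ Ioc 0 R = ∅ := by
        ext u
        simp only [mem_inter_iff, mem_Ioc, mem_empty_iff_false, iff_false]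
        rintro ⟨h1, -, h3⟩
        exact absurd (lt_trans hRt h1) (not_lt.2 h3)
      rw [indicator_of_notMem (fun h => not_le.2 hRt h.2)]
      simp [Measure.real, Measure.restrict_apply' measurableSet_Ioc, this]
  rw [(hν.integrableOn_id_Ioc R).integral_eq_integral_meas_lt
    ((ae_restrict_mem measurableSet_Ioc).mono fun u hu => le_of_lt hu.1)]
  calc ∫ t in Ioi 0, (ν.restrict (Ioc 0 R)).real {u | t < u}
      ≤ ∫ t in Ioi 0, (Ioc 0 R).indicator g t := by
        refine integral_mono_of_nonneg (Filter.Eventually.of_forall fun t => measureReal_nonneg)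
          ((integrable_indicator_iff measurableSet_Ioc).2 hg).integrableOn ?_
        filter_upwards [ae_restrict_mem measurableSet_Ioi] using hlayer
    _ = ∫ t in Ioc 0 R, g t := by
        rw [integral_indicator measurableSet_Ioc, Measure.restrict_restrict measurableSet_Ioc,
          inter_eq_left.2 Ioc_subset_Ioi_self]
    _ = c * levyTail ν R * R / (1 - b) := by
        rw [integral_const_mul, ← intervalIntegral.integral_of_le hR.le,
          integral_rpow (Or.inl (by linarith)), zero_rpow (by linarith), sub_zero, mul_div_assoc',
          mul_assoc, ← rpow_add hR, show b + (-b + 1) = 1 by ring, rpow_one]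
        ring

theorem laplaceExp_inv_le_levyTail {R c b : ℝ} (hR : 0 < R) (hb : b < 1)
    (hP : ∀ t, 0 < t → t ≤ R → levyTail ν t ≤ c * (R / t) ^ b * levyTail ν R) :
    laplaceExp ν R⁻¹ ≤ (1 + c / (1 - b)) * levyTail ν R := by
  have hint := hν.integrable_one_sub_exp (inv_pos.2 hR).le
  have hsplit : laplaceExp ν R⁻¹ = (∫ u in Ioc 0 R, (1 - exp (-(R⁻¹ * u))) ∂ν) +
      ∫ u in Ioi R, (1 - exp (-(R⁻¹ * u))) ∂ν := by
    rw [← setIntegral_union (Ioc_disjoint_Ioi le_rfl) measurableSet_Ioi hint.integrableOn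
      hint.integrableOn, Ioc_union_Ioi_eq_Ioi hR.le, hν.restrict_Ioi_zero, laplaceExp]
  have hsmall : ∫ u in Ioc 0 R, (1 - exp (-(R⁻¹ * u))) ∂ν ≤ R⁻¹ * ∫ u in Ioc 0 R, u ∂ν := by
    rw [← integral_const_mul]
    exact setIntegral_mono_on hint.integrableOn ((hν.integrableOn_id_Ioc R).const_mul _)
      measurableSet_Ioc fun u _ => by linarith [one_sub_le_exp_neg (R⁻¹ * u)]
  have hlarge : ∫ u in Ioi R, (1 - exp (-(R⁻¹ * u))) ∂ν ≤ levyTail ν R := by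
    calc ∫ u in Ioi R, (1 - exp (-(R⁻¹ * u))) ∂ν ≤ ∫ _ in Ioi R, (1 : ℝ) ∂ν :=
          setIntegral_mono_on hint.integrableOn (integrableOn_const (hν.tail_fin R hR).ne)
            measurableSet_Ioi fun u _ => by linarith [exp_pos (-(R⁻¹ * u))]
      _ = levyTail ν R := by rw [setIntegral_const, smul_eq_mul, mul_one]; rfl
  calc laplaceExp ν R⁻¹ ≤ R⁻¹ * (c * levyTail ν R * R / (1 - b)) + levyTail ν R := by
        rw [hsplit]
        gcongr
        exact hsmall.trans (by gcongr; exact hν.setIntegral_id_Ioc_le hR hb hP)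
    _ = (1 + c / (1 - b)) * levyTail ν R := by field_simp; ring

end IsLevyMeasure

namespace PolyCond

variable {ν : Measure ℝ} {R₁ : ℝ≥0∞} {cw cw' β₁ β₂ : ℝ}

theorem levyTail_pos (hcw : 0 < cw) (hP : PolyCond ν R₁ cw cw' β₁ β₂) {R : ℝ} (hR : 0 < R)
    (hR₁ : ENNReal.ofReal R < R₁) : 0 < levyTail ν R := by
  refine lt_of_le_of_ne ENNReal.toReal_nonneg fun h0 => ?_
  have := (hP R R hR le_rfl hR₁).1
  rw [← h0, div_zero, div_self hR.ne', one_rpow, mul_one] at this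
  exact hcw.not_ge this

theorem laplaceExp_inv_pos (hν : IsLevyMeasure ν) (hcw : 0 < cw)
    (hP : PolyCond ν R₁ cw cw' β₁ β₂) {r : ℝ} (hr : 0 < r) (hr₁ : ENNReal.ofReal r < R₁) :
    0 < laplaceExp ν r⁻¹ :=
  (mul_pos (sub_pos.2 (exp_lt_one_iff.2 (by norm_num))) (hP.levyTail_pos hcw hr hr₁)).trans_le
    (hν.levyTail_le_laplaceExp_inv hr)

/-- For `β₂ ≥ 1` this is the monotonicity of `φ(λ)/λ`; for `β₂ < 1` it follows from
`φ(1/r) ≍ w(r)`. -/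
theorem laplaceExp_inv_scaling (hν : IsLevyMeasure ν) (hcw : 0 < cw) (hcw' : 0 < cw')
    (hP : PolyCond ν R₁ cw cw' β₁ β₂) :
    ∃ cφ : ℝ, 0 < cφ ∧ ∀ a s : ℝ, 0 < a → a ≤ s → ENNReal.ofReal s < R₁ →
      cφ * (a / s) ^ min β₂ 1 * laplaceExp ν a⁻¹ ≤ laplaceExp ν s⁻¹ := by
  rcases le_or_gt 1 β₂ with hβ | hβ
  · refine ⟨1, one_pos, fun a s ha has _ => ?_⟩
    have hs : 0 < s := ha.trans_le has
    have := hν.mul_laplaceExp_le (inv_pos.2 hs) (inv_anti₀ ha has)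
    rw [min_eq_right hβ, rpow_one, one_mul, div_eq_mul_inv]
    calc a * s⁻¹ * laplaceExp ν a⁻¹ = a * (s⁻¹ * laplaceExp ν a⁻¹) := by ring
      _ ≤ a * (a⁻¹ * laplaceExp ν s⁻¹) := by gcongr
      _ = laplaceExp ν s⁻¹ := by field_simp
  set C := 1 + cw' / (1 - β₂)
  have hC : 0 < C := by have : 0 < cw' / (1 - β₂) := div_pos hcw' (by linarith); linarith
  have he : 0 < 1 - exp (-1) := sub_pos.2 (exp_lt_one_iff.2 (by norm_num))
  refine ⟨(1 - exp (-1)) / (cw' * C), by positivity, fun a s ha has hs₁ => ?_⟩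
  have hs : 0 < s := ha.trans_le has
  have ha₁ : ENNReal.ofReal a < R₁ := (ENNReal.ofReal_le_ofReal has).trans_lt hs₁
  have hwa := hP.levyTail_pos hcw ha ha₁
  have hws := hP.levyTail_pos hcw hs hs₁
  have hφa : laplaceExp ν a⁻¹ ≤ C * levyTail ν a := by
    refine hν.laplaceExp_inv_le_levyTail ha hβ fun t ht hta => ?_
    have := (hP t a ht hta ha₁).2
    rwa [div_le_iff₀ hwa] at this
  have hwas : levyTail ν a ≤ cw' * (s / a) ^ β₂ * levyTail ν s := by
    have := (hP a s ha has hs₁).2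
    rwa [div_le_iff₀ hws] at this
  have hprod : (a / s) ^ β₂ * (s / a) ^ β₂ = 1 := by
    rw [← mul_rpow (by positivity) (by positivity), div_mul_div_cancel₀ hs.ne', div_self ha.ne',
      one_rpow]
  rw [min_eq_left hβ.le]
  calc (1 - exp (-1)) / (cw' * C) * (a / s) ^ β₂ * laplaceExp ν a⁻¹
      ≤ (1 - exp (-1)) / (cw' * C) * (a / s) ^ β₂ * (C * (cw' * (s / a) ^ β₂ * levyTail ν s)) := by
        gcongr
        exact hφa.trans (by gcongr)
    _ = (1 - exp (-1)) * levyTail ν s * ((a / s) ^ β₂ * (s / a) ^ β₂) := by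
        field_simp
    _ ≤ laplaceExp ν s⁻¹ := by
        rw [hprod, mul_one]
        exact hν.levyTail_le_laplaceExp_inv hs

end PolyCond

namespace WeakScaling

variable {Φ : ℝ → ℝ} {c c' α₁ α₂ : ℝ}

theorem div_le_rpow_inv_of_le_mul (hΦ : WeakScaling Φ c c' α₁ α₂) (hc : 0 < c) (hα₁ : 0 < α₁)
    {r R k : ℝ} (hr : 0 < r) (hrR : r ≤ R) (hΦr : 0 < Φ r) (hk : Φ R ≤ k * Φ r) :
    R / r ≤ (k / c) ^ α₁⁻¹ := by
  have hRr : 0 ≤ R / r := div_nonneg (hr.le.trans hrR) hr.le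
  have h : c * (R / r) ^ α₁ ≤ k :=
    le_of_mul_le_mul_right (((le_div_iff₀ hΦr).1 (hΦ r R hr hrR).1).trans hk) hΦr
  have hk0 : 0 ≤ k / c := div_nonneg ((mul_nonneg hc.le (rpow_nonneg hRr α₁)).trans h) hc.le
  rw [le_rpow_inv_iff_of_pos hRr hk0 hα₁, le_div_iff₀ hc, mul_comm]
  exact h

theorem rpow_inv_le_div (hΦ : WeakScaling Φ c c' α₁ α₂) (hc' : 0 < c') (hα₂ : 0 < α₂)
    {r R : ℝ} (hr : 0 < r) (hrR : r ≤ R) (hΦr : 0 < Φ r) (hΦR : 0 ≤ Φ R) :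
    (Φ R / Φ r / c') ^ α₂⁻¹ ≤ R / r := by
  rw [rpow_inv_le_iff_of_pos (by positivity) (div_nonneg (hr.le.trans hrR) hr.le) hα₂,
    div_le_iff₀ hc', mul_comm]
  exact (hΦ r R hr hrR).2

end WeakScaling

theorem StrictMonoOn.le_rightInverse_iff {Φ ΦInv : ℝ → ℝ} (hΦ : StrictMonoOn Φ (Ici 0))
    (hΦInv : ∀ s, 0 < s → 0 < ΦInv s ∧ Φ (ΦInv s) = s) {r s : ℝ} (hr : 0 ≤ r) (hs : 0 < s) :
    r ≤ ΦInv s ↔ Φ r ≤ s := by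
  rw [← hΦ.le_iff_le hr (hΦInv s hs).1.le, (hΦInv s hs).2]

theorem StrictMonoOn.monotoneOn_rightInverse {Φ ΦInv : ℝ → ℝ} (hΦ : StrictMonoOn Φ (Ici 0))
    (hΦInv : ∀ s, 0 < s → 0 < ΦInv s ∧ Φ (ΦInv s) = s) : MonotoneOn ΦInv (Ioi 0) :=
  fun s hs _ ht hst => (hΦ.le_rightInverse_iff hΦInv (hΦInv s hs).1.le ht).2
    ((hΦInv s hs).2.symm ▸ hst)

theorem integrableOn_of_le_rpow {F : ℝ → ℝ} {S : Set ℝ} {a δ U : ℝ} (ha : 0 < a) (hδ : 0 < δ)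
    (hS : MeasurableSet S) (hSa : S ⊆ Ioi a) (hF : AEStronglyMeasurable F (volume.restrict S))
    (hF0 : ∀ s ∈ S, 0 ≤ F s) (hFU : ∀ s ∈ S, F s ≤ U * (a ^ δ * s ^ (-1 - δ))) :
    IntegrableOn F S := by
  have hmaj : IntegrableOn (fun s => U * (a ^ δ * s ^ (-1 - δ))) (Ioi a) :=
    ((integrableOn_Ioi_rpow_of_lt (by linarith) ha).const_mul _).const_mul _
  refine Integrable.mono' (hmaj.mono_set hSa) hF ?_
  filter_upwards [ae_restrict_mem hS] with s hs
  rw [Real.norm_of_nonneg (hF0 s hs)]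
  exact hFU s hs

theorem setIntegral_le_of_le_rpow {F : ℝ → ℝ} {S : Set ℝ} {a δ U : ℝ} (ha : 0 < a)
    (hδ : 0 < δ) (hU : 0 ≤ U) (hS : MeasurableSet S) (hSa : S ⊆ Ioi a)
    (hF : AEStronglyMeasurable F (volume.restrict S)) (hF0 : ∀ s ∈ S, 0 ≤ F s)
    (hFU : ∀ s ∈ S, F s ≤ U * (a ^ δ * s ^ (-1 - δ))) :
    ∫ s in S, F s ≤ U / δ := by
  have hmaj : IntegrableOn (fun s => U * (a ^ δ * s ^ (-1 - δ))) (Ioi a) :=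
    ((integrableOn_Ioi_rpow_of_lt (by linarith) ha).const_mul _).const_mul _
  calc ∫ s in S, F s ≤ ∫ s in S, U * (a ^ δ * s ^ (-1 - δ)) :=
        setIntegral_mono_on (integrableOn_of_le_rpow ha hδ hS hSa hF hF0 hFU)
          (hmaj.mono_set hSa) hS hFU
    _ ≤ ∫ s in Ioi a, U * (a ^ δ * s ^ (-1 - δ)) := by
        refine setIntegral_mono_set hmaj ?_ hSa.eventuallyLE
        filter_upwards [ae_restrict_mem measurableSet_Ioi] with s hs
        have : 0 < s := ha.trans hs
        positivity
    _ = U / δ := by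
        rw [integral_const_mul, integral_const_mul, integral_Ioi_rpow_of_lt (by linarith) ha,
          show -1 - δ + 1 = -δ by ring, mul_div_assoc', mul_neg, ← rpow_add ha, add_neg_cancel,
          rpow_zero, neg_div_neg_eq, one_div, div_eq_mul_inv]

theorem le_setIntegral_of_le_on_Ioc {F : ℝ → ℝ} {S : Set ℝ} {a L : ℝ} (ha : 0 < a)
    (hS : MeasurableSet S) (hS2a : Ioc a (2 * a) ⊆ S) (hFS : IntegrableOn F S)
    (hF0 : ∀ s ∈ S, 0 ≤ F s) (hFL : ∀ s ∈ Ioc a (2 * a), L / a ≤ F s) :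
    L ≤ ∫ s in S, F s := by
  calc L = L / a * volume.real (Ioc a (2 * a)) := by
        rw [Real.volume_real_Ioc_of_le (by linarith)]
        field_simp
        ring
    _ ≤ ∫ s in Ioc a (2 * a), F s :=
        setIntegral_ge_of_const_le_real measurableSet_Ioc measure_Ioc_lt_top.ne hFL
          (hFS.mono_set hS2a)
    _ ≤ ∫ s in S, F s := by
        refine setIntegral_mono_set hFS ?_ hS2a.eventuallyLE
        filter_upwards [ae_restrict_mem hS] using hF0

theorem inv_mul_le_and_le_mul_of_le {A B M I : ℝ} (hA : 0 < A) (hM : 0 ≤ M)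
    (hlow : A⁻¹ * M ≤ I) (hup : I ≤ B * M) :
    (max 1 (max A B))⁻¹ * M ≤ I ∧ I ≤ max 1 (max A B) * M :=
  ⟨le_trans (by gcongr; exact le_max_of_le_right (le_max_left _ _)) hlow,
    hup.trans (by gcongr; exact le_max_of_le_right (le_max_right _ _))⟩

def VolDoublingBelow {E : Type*} [PseudoMetricSpace E] [MeasurableSpace E] (m : Measure E)
    (B : ℝ≥0∞) (CV d₁ d₂ : ℝ) : Prop :=
  ∀ (x : E) (r R : ℝ), 0 < r → r ≤ R → ENNReal.ofReal R < B →
    CV⁻¹ * (R / r) ^ d₁ ≤ vol m x R / vol m x r ∧ vol m x R / vol m x r ≤ CV * (R / r) ^ d₂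

section Volume

variable {E : Type*} [PseudoMetricSpace E] [MeasurableSpace E] {m : Measure E} {d₁ d₂ : ℝ}

theorem VolDoubling.exists_volDoublingBelow {R_E : ℝ≥0∞} (hVD : VolDoubling m R_E d₁ d₂)
    (hRE : 0 < R_E) {B : ℝ≥0∞} (hB : B ≠ ⊤ ∨ R_E = ⊤) :
    ∃ CV, 1 ≤ CV ∧ VolDoublingBelow m B CV d₁ d₂ := by
  obtain ⟨a, ha, hBa⟩ : ∃ a : ℝ, 1 ≤ a ∧ B ≤ ENNReal.ofReal a * R_E := by
    rcases hB with hB | rfl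
    · obtain ⟨n, hn⟩ := ENNReal.exists_nat_mul_gt hRE.ne' hB
      refine ⟨max 1 n, le_max_left _ _, hn.le.trans (mul_le_mul_left ?_ _)⟩
      rw [← ENNReal.ofReal_natCast]
      exact ENNReal.ofReal_le_ofReal (le_max_right _ _)
    · exact ⟨1, le_rfl, by simp⟩
  obtain ⟨CV, hCV, hV⟩ := hVD a ha
  exact ⟨CV, hCV, fun x r R hr hrR hR => hV x r R hr hrR (hR.trans_le hBa)⟩

theorem vol_le_vol {x : E} {r R : ℝ} (hm : m (ball x R) ≠ ⊤) (h : r ≤ R) :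
    vol m x r ≤ vol m x R :=
  ENNReal.toReal_mono hm (measure_mono (ball_subset_ball h))

theorem monotoneOn_vol {x : E} (hm : ∀ r, 0 < r → m (ball x r) < ⊤) :
    MonotoneOn (vol m x) (Ioi 0) :=
  fun _ _ _ hR hrR => vol_le_vol (hm _ hR).ne hrR

namespace VolDoublingBelow

variable {B : ℝ≥0∞} {CV : ℝ} {Φ : ℝ → ℝ} {c c' α₁ α₂ : ℝ} {x : E} {ρ R : ℝ}

theorem mul_rpow_le_vol (hV : VolDoublingBelow m B CV d₁ d₂) (hCV : 0 ≤ CV) (hd₁ : 0 ≤ d₁)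
    (hΦ : WeakScaling Φ c c' α₁ α₂) (hc' : 0 < c') (hα₂ : 0 < α₂) (hρ : 0 < ρ) (hρR : ρ ≤ R)
    (hRB : ENNReal.ofReal R < B) (hΦρ : 0 < Φ ρ) (hΦR : 0 ≤ Φ R) (hvol : 0 < vol m x ρ) :
    CV⁻¹ * (Φ R / Φ ρ / c') ^ (d₁ / α₂) * vol m x ρ ≤ vol m x R := by
  rw [← le_div_iff₀ hvol]
  refine le_trans ?_ (hV x ρ R hρ hρR hRB).1
  gcongr
  rw [div_eq_mul_inv d₁, mul_comm d₁, rpow_mul (by positivity)]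
  gcongr
  exact hΦ.rpow_inv_le_div hc' hα₂ hρ hρR hΦρ hΦR

theorem vol_le_mul (hV : VolDoublingBelow m B CV d₁ d₂) (hCV : 0 ≤ CV) (hd₂ : 0 ≤ d₂)
    (hΦ : WeakScaling Φ c c' α₁ α₂) (hc : 0 < c) (hα₁ : 0 < α₁) (hρ : 0 < ρ) (hρR : ρ ≤ R)
    (hRB : ENNReal.ofReal R < B) (hΦρ : 0 < Φ ρ) (h2 : Φ R ≤ 2 * Φ ρ) (hvol : 0 < vol m x ρ) :
    vol m x R ≤ CV * ((2 / c) ^ α₁⁻¹) ^ d₂ * vol m x ρ := by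
  rw [← div_le_iff₀ hvol]
  refine (hV x ρ R hρ hρR hRB).2.trans ?_
  gcongr
  · exact div_nonneg (hρ.le.trans hρR) hρ.le
  · exact hΦ.div_le_rpow_inv_of_le_mul hc hα₁ hρ hρR hΦρ h2

end VolDoublingBelow

end Volume

theorem IsBoundaryFunction.le_mul_two_mul {E : Type*} {D : Set E} {h : ℝ → E → E → ℝ}
    {T : ℝ≥0∞} {cH γ : ℝ} (hh : IsBoundaryFunction D h T cH γ) {x y : E} (hx : x ∈ D)
    (hy : y ∈ D) {t : ℝ} (ht : 0 < t) (hT : ENNReal.ofReal (2 * t) < T) :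
    h t x y ≤ cH * 2 ^ γ * h (2 * t) x y := by
  have h2 := hh.2.2 x y hx hy t (2 * t) ht (by linarith) hT
  rw [mul_rpow zero_le_two ht.le] at h2
  exact le_of_mul_le_mul_left (h2.trans_eq (by ring)) (rpow_pos_of_pos ht γ)

theorem IsBoundaryFunction.antitoneOn {E : Type*} {D : Set E} {h : ℝ → E → E → ℝ}
    {T : ℝ≥0∞} {cH γ : ℝ} (hh : IsBoundaryFunction D h T cH γ) {x y : E} (hx : x ∈ D)
    (hy : y ∈ D) : AntitoneOn (fun s => h s x y) (Ioi 0) :=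
  fun s hs _ _ hst => hh.2.1 x y hx hy s _ hs hst

section GreenTail

variable {E : Type*} [PseudoMetricSpace E] [MeasurableSpace E] {m : Measure E}
  {ν : Measure ℝ} {h : ℝ → E → E → ℝ} {ΦInv : ℝ → ℝ} {x y : E}

/-- The integrand of `G̃_D(x,y)`. -/
noncomputable def greenTailIntegrand (m : Measure E) (ν : Measure ℝ) (h : ℝ → E → E → ℝ)
    (ΦInv : ℝ → ℝ) (x y : E) (s : ℝ) : ℝ :=
  h s x y / (s * vol m x (ΦInv s) * laplaceExp ν s⁻¹)

theorem aestronglyMeasurable_greenTailIntegrand {S : Set ℝ} (hS : MeasurableSet S)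
    (hh : AntitoneOn (fun s => h s x y) S) (hV : MonotoneOn (fun s => vol m x (ΦInv s)) S)
    (hφ : AntitoneOn (fun s => laplaceExp ν s⁻¹) S) :
    AEStronglyMeasurable (greenTailIntegrand m ν h ΦInv x y) (volume.restrict S) :=
  ((aemeasurable_restrict_of_antitoneOn hS hh).div ((measurable_id.aemeasurable.mul
    (aemeasurable_restrict_of_monotoneOn hS hV)).mul
      (aemeasurable_restrict_of_antitoneOn hS hφ))).aestronglyMeasurable

theorem greenTailIntegrand_le {a s CV c' cφ q β φa Vρ : ℝ} (ha : 0 < a) (has : a < s)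
    (hCV : 0 < CV) (hc' : 0 < c') (hcφ : 0 < cφ) (hφa : 0 < φa) (hVρ : 0 < Vρ)
    (hhs : 0 ≤ h s x y) (hh : h s x y ≤ h a x y)
    (hV : CV⁻¹ * (s / a / c') ^ q * Vρ ≤ vol m x (ΦInv s))
    (hφ : cφ * (a / s) ^ β * φa ≤ laplaceExp ν s⁻¹) :
    greenTailIntegrand m ν h ΦInv x y s ≤
      CV * c' ^ q / cφ * (h a x y * φa⁻¹ / Vρ) * (a ^ (q - β) * s ^ (-1 - (q - β))) := by
  have hs : 0 < s := ha.trans has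
  calc greenTailIntegrand m ν h ΦInv x y s
      ≤ h a x y / (s * (CV⁻¹ * (s / a / c') ^ q * Vρ) * (cφ * (a / s) ^ β * φa)) :=
        div_le_div₀ (hhs.trans hh) hh (by positivity)
          (by gcongr; exact mul_nonneg hs.le ENNReal.toReal_nonneg)
    _ = _ := by
        rw [div_rpow (by positivity) hc'.le, div_rpow hs.le ha.le, div_rpow ha.le hs.le,
          rpow_sub ha, rpow_sub hs, rpow_sub hs, rpow_neg_one]
        have : 0 < a ^ q := rpow_pos_of_pos ha q
        have : 0 < a ^ β := rpow_pos_of_pos ha β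
        have : 0 < s ^ q := rpow_pos_of_pos hs q
        have : 0 < s ^ β := rpow_pos_of_pos hs β
        have : 0 < c' ^ q := rpow_pos_of_pos hc' q
        field_simp

theorem le_greenTailIntegrand {a s C cH2 φa Vρ : ℝ} (ha : 0 < a) (has : a < s)
    (hs2a : s ≤ 2 * a) (hC : 0 < C) (hcH2 : 0 < cH2) (hφa : 0 < φa) (hVρ : 0 < Vρ)
    (hhs : 0 ≤ h s x y) (hh : h a x y ≤ cH2 * h s x y)
    (hVs : 0 < vol m x (ΦInv s)) (hV : vol m x (ΦInv s) ≤ C * Vρ)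
    (hφs : 0 < laplaceExp ν s⁻¹) (hφ : laplaceExp ν s⁻¹ ≤ φa) :
    (2 * cH2 * C)⁻¹ * (h a x y * φa⁻¹ / Vρ) / a ≤ greenTailIntegrand m ν h ΦInv x y s := by
  have hs : 0 < s := ha.trans has
  calc (2 * cH2 * C)⁻¹ * (h a x y * φa⁻¹ / Vρ) / a
      = h a x y / cH2 / (2 * a * (C * Vρ) * φa) := by field_simp
    _ ≤ greenTailIntegrand m ν h ΦInv x y s :=
        div_le_div₀ hhs ((div_le_iff₀' hcH2).2 hh) (by positivity) (by gcongr)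

theorem greenTail_two_sided_of_bounds {S : Set ℝ} {a Vρ CV c' cφ q β C cH2 : ℝ}
    (ha : 0 < a) (hβq : β < q) (hS : MeasurableSet S) (hSa : S ⊆ Ioi a)
    (hS2a : Ioc a (2 * a) ⊆ S) (hCV : 0 < CV) (hc' : 0 < c') (hcφ : 0 < cφ) (hC : 0 < C)
    (hcH2 : 0 < cH2) (hφa : 0 < laplaceExp ν a⁻¹) (hVρ : 0 < Vρ)
    (hh0 : ∀ s ∈ S, 0 ≤ h s x y) (hh : AntitoneOn (fun s => h s x y) (Ioi 0))
    (hh2 : h a x y ≤ cH2 * h (2 * a) x y)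
    (hV : MonotoneOn (fun s => vol m x (ΦInv s)) (Ioi 0))
    (hVlow : ∀ s ∈ S, CV⁻¹ * (s / a / c') ^ q * Vρ ≤ vol m x (ΦInv s))
    (hVup : ∀ s ∈ Ioc a (2 * a), vol m x (ΦInv s) ≤ C * Vρ)
    (hφ : AntitoneOn (fun s => laplaceExp ν s⁻¹) (Ioi 0))
    (hφlow : ∀ s ∈ S, cφ * (a / s) ^ β * laplaceExp ν a⁻¹ ≤ laplaceExp ν s⁻¹) :
    let M := h a x y * (laplaceExp ν a⁻¹)⁻¹ / Vρ
    (2 * cH2 * C)⁻¹ * M ≤ ∫ s in S, greenTailIntegrand m ν h ΦInv x y s ∧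
      ∫ s in S, greenTailIntegrand m ν h ΦInv x y s ≤ CV * c' ^ q / cφ / (q - β) * M := by
  intro M
  have hS0 : S ⊆ Ioi 0 := fun s hs => ha.trans (hSa hs)
  have h2a : 2 * a ∈ S := hS2a ⟨by linarith, le_rfl⟩
  have hM : 0 ≤ M := div_nonneg (mul_nonneg ((hh0 _ h2a).trans (hh ha (hS0 h2a) (by linarith)))
    (inv_pos.2 hφa).le) hVρ.le
  have hφs0 : ∀ s ∈ S, 0 < laplaceExp ν s⁻¹ := fun s hs =>
    (by have : 0 < s := hS0 hs; positivity : 0 < cφ * (a / s) ^ β * laplaceExp ν a⁻¹).trans_le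
      (hφlow s hs)
  have hVs0 : ∀ s ∈ S, 0 < vol m x (ΦInv s) := fun s hs =>
    (by have : 0 < s := hS0 hs; positivity : 0 < CV⁻¹ * (s / a / c') ^ q * Vρ).trans_le
      (hVlow s hs)
  have hF0 : ∀ s ∈ S, 0 ≤ greenTailIntegrand m ν h ΦInv x y s := by
    intro s hs
    have : 0 < s := hS0 hs
    have := hφs0 s hs
    have := hVs0 s hs
    exact div_nonneg (hh0 s hs) (by positivity)
  have hup : ∀ s ∈ S, greenTailIntegrand m ν h ΦInv x y s ≤
      CV * c' ^ q / cφ * M * (a ^ (q - β) * s ^ (-1 - (q - β))) :=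
    fun s hs => greenTailIntegrand_le ha (hSa hs) hCV hc' hcφ hφa hVρ (hh0 s hs)
      (hh ha (hS0 hs) (hSa hs).le) (hVlow s hs) (hφlow s hs)
  have hmeas := aestronglyMeasurable_greenTailIntegrand hS (hh.mono hS0) (hV.mono hS0)
    (hφ.mono hS0)
  refine ⟨le_setIntegral_of_le_on_Ioc ha hS hS2a
    (integrableOn_of_le_rpow ha (sub_pos.2 hβq) hS hSa hmeas hF0 hup) hF0 fun s hs => ?_, ?_⟩
  · have hsS := hS2a hs
    exact le_greenTailIntegrand ha hs.1 hs.2 hC hcH2 hφa hVρ (hh0 s hsS)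
      (hh2.trans (by gcongr; exact hh (hS0 hsS) (hS0 h2a) hs.2)) (hVs0 s hsS) (hVup s hs)
      (hφs0 s hsS) (hφ ha (hS0 hsS) hs.1.le)
  · exact (setIntegral_le_of_le_rpow ha (sub_pos.2 hβq) (by positivity) hS hSa hmeas hF0
      hup).trans_eq (by ring)

end GreenTail

theorem exists_greenTail_comparable {E : Type*} [PseudoMetricSpace E] [MeasurableSpace E]
    {m : Measure E} {D : Set E} {Φ ΦInv : ℝ → ℝ} {h : ℝ → E → E → ℝ} {ν : Measure ℝ}
    {R₁ B T : ℝ≥0∞} {cw cw' β₁ β₂ cA cA' α₁ α₂ CV d₁ d₂ cH γ : ℝ}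
    (hν : IsLevyMeasure ν) (hcw : 0 < cw) (hcw' : 0 < cw') (hP : PolyCond ν R₁ cw cw' β₁ β₂)
    (hΦ0 : Φ 0 = 0) (hΦmono : StrictMonoOn Φ (Ici 0))
    (hΦInv : ∀ s, 0 < s → 0 < ΦInv s ∧ Φ (ΦInv s) = s) (hΦsc : WeakScaling Φ cA cA' α₁ α₂)
    (hcA : 0 < cA) (hcA' : 0 < cA') (hα₁ : 0 < α₁) (hα₁₂ : α₁ ≤ α₂)
    (hm : ∀ (x : E) (r : ℝ), 0 < r → 0 < m (ball x r) ∧ m (ball x r) < ⊤)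
    (hV : VolDoublingBelow m B CV d₁ d₂) (hCV : 0 < CV) (hd₁ : 0 < d₁) (hd : d₁ ≤ d₂)
    (hh : IsBoundaryFunction D h T cH γ) (hcH : 0 < cH) (hdim : α₂ * min β₂ 1 < d₁) :
    ∃ C : ℝ, 1 ≤ C ∧ ∀ x ∈ D, ∀ y ∈ D, 0 < dist x y → ∀ S : Set ℝ, MeasurableSet S →
      S ⊆ Ioi (Φ (dist x y)) → Ioc (Φ (dist x y)) (2 * Φ (dist x y)) ⊆ S →
      ENNReal.ofReal (2 * Φ (dist x y)) < T →
      (∀ s ∈ S, ENNReal.ofReal s < R₁ ∧ ENNReal.ofReal (ΦInv s) < B) →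
      C⁻¹ * (h (Φ (dist x y)) x y * psiFun ν Φ (dist x y) / vol m x (dist x y)) ≤
          ∫ s in S, greenTailIntegrand m ν h ΦInv x y s ∧
        ∫ s in S, greenTailIntegrand m ν h ΦInv x y s ≤
          C * (h (Φ (dist x y)) x y * psiFun ν Φ (dist x y) / vol m x (dist x y)) := by
  obtain ⟨cφ, hcφ, hφsc⟩ := hP.laplaceExp_inv_scaling hν hcw hcw'
  have hα₂ : 0 < α₂ := hα₁.trans_le hα₁₂
  set K := (2 / cA) ^ α₁⁻¹
  refine ⟨max 1 (max (2 * (cH * 2 ^ γ) * (CV * K ^ d₂))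
    (CV * cA' ^ (d₁ / α₂) / cφ / (d₁ / α₂ - min β₂ 1))),
    le_max_left _ _, fun x hx y hy hρ S hS hSa hS2a hT hSB => ?_⟩
  set ρ := dist x y
  set a := Φ ρ
  have ha : 0 < a := hΦ0 ▸ hΦmono self_mem_Ici hρ.le hρ
  have hvol : ∀ r, 0 < r → 0 < vol m x r :=
    fun r hr => ENNReal.toReal_pos (hm x r hr).1.ne' (hm x r hr).2.ne
  have hρs : ∀ s, a < s → ρ ≤ ΦInv s :=
    fun s has => (hΦmono.le_rightInverse_iff hΦInv hρ.le (ha.trans has)).2 has.le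
  have hVlow : ∀ s ∈ S, CV⁻¹ * (s / a / cA') ^ (d₁ / α₂) * vol m x ρ ≤ vol m x (ΦInv s) := by
    intro s hs
    have hΦs := (hΦInv s (ha.trans (hSa hs))).2
    have := hV.mul_rpow_le_vol hCV.le hd₁.le hΦsc hcA' hα₂ hρ (hρs s (hSa hs)) (hSB s hs).2 ha
      (by rw [hΦs]; exact (ha.trans (hSa hs)).le) (hvol ρ hρ)
    rwa [hΦs] at this
  have hVup : ∀ s ∈ Ioc a (2 * a), vol m x (ΦInv s) ≤ CV * K ^ d₂ * vol m x ρ := by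
    intro s hs
    exact hV.vol_le_mul hCV.le (hd₁.le.trans hd) hΦsc hcA hα₁ hρ (hρs s hs.1)
      (hSB s (hS2a hs)).2 ha (by rw [(hΦInv s (ha.trans hs.1)).2]; exact hs.2) (hvol ρ hρ)
  have hφa : 0 < laplaceExp ν a⁻¹ := hP.laplaceExp_inv_pos hν hcw ha
    ((ENNReal.ofReal_le_ofReal (by linarith)).trans_lt (hSB _ (hS2a ⟨by linarith, le_rfl⟩)).1)
  obtain ⟨hlow, hup⟩ := greenTail_two_sided_of_bounds (q := d₁ / α₂) (β := min β₂ 1) ha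
    ((lt_div_iff₀ hα₂).2 (by linarith)) hS hSa hS2a hCV hcA' hcφ (by positivity)
    (by positivity) hφa (hvol ρ hρ) (fun s hs => (hh.1 s x y (ha.trans (hSa hs)) hx hy).1)
    (hh.antitoneOn hx hy) (hh.le_mul_two_mul hx hy ha hT)
    ((monotoneOn_vol fun r hr => (hm x r hr).2).comp (hΦmono.monotoneOn_rightInverse hΦInv)
      fun s hs => (hΦInv s hs).1) hVlow hVup hν.antitoneOn_laplaceExp_inv
    (fun s hs => hφsc a s ha (hSa hs).le (hSB s hs).1)
  exact inv_mul_le_and_le_mul_of_le (by positivity)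
    (div_nonneg (mul_nonneg (hh.1 a x y ha hx hy).1 (inv_pos.2 hφa).le) (hvol ρ hρ).le) hlow hup

theorem green_tail_estimate_high_dimension_general
    {E : Type*} [MetricSpace E] [MeasurableSpace E]
    (m : Measure E) (R_E : ℝ≥0∞) (d₁ d₂ : ℝ)
    (hm : ∀ (x : E) (r : ℝ), 0 < r → 0 < m (Metric.ball x r) ∧ m (Metric.ball x r) < ⊤)
    (hRE : 0 < R_E) (hd₁ : 0 < d₁) (hd : d₁ ≤ d₂) (hVD : VolDoubling m R_E d₁ d₂)
    (D : Set E)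
    (Φ Ψ : ℝ → ℝ) (cA cA' α₁ α₂ : ℝ)
    (hΦ0 : Φ 0 = 0) (hΦmono : StrictMonoOn Φ (Set.Ici 0))
    (hcA : 0 < cA) (hcA' : 0 < cA') (hα₁ : 0 < α₁) (hα₁₂ : α₁ ≤ α₂)
    (hΦsc : WeakScaling Φ cA cA' α₁ α₂)
    (ΦInv : ℝ → ℝ) (hΦInv : ∀ s : ℝ, 0 < s → 0 < ΦInv s ∧ Φ (ΦInv s) = s)
    (h : ℝ → E → E → ℝ) (cH γ : ℝ) (hcH : 0 < cH)
    (pD : ℝ → E → E → ℝ)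
    (ν : Measure ℝ) (μ : ℝ → Measure ℝ) (hsub : IsSubordinatorLaw ν μ)
    (R₁ : ℝ≥0∞) (cw cw' β₁ β₂ : ℝ)
    (hcw : 0 < cw) (hcw' : 0 < cw')
    (C₀ cl cexl cu cexu : ℝ)
    (hdim : α₂ * min β₂ 1 < d₁) :
    (BddCaseHyp m D Φ Ψ ΦInv h pD ν R₁ cw cw' β₁ β₂ cH γ C₀ cl cexl cu cexu →
      ∃ C : ℝ, 1 ≤ C ∧ ∀ x y : E, x ∈ D → y ∈ D → x ≠ y →
        C⁻¹ * (h (Φ (dist x y)) x y * psiFun ν Φ (dist x y) / vol m x (dist x y))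
          ≤ (∫ s in Set.Ioc (Φ (dist x y)) (2 * Φ (Metric.diam D)),
              h s x y / (s * vol m x (ΦInv s) * laplaceExp ν (s⁻¹))) ∧
        (∫ s in Set.Ioc (Φ (dist x y)) (2 * Φ (Metric.diam D)),
            h s x y / (s * vol m x (ΦInv s) * laplaceExp ν (s⁻¹))) ≤
          C * (h (Φ (dist x y)) x y * psiFun ν Φ (dist x y) / vol m x (dist x y))) ∧
    (UnbddCaseHyp m D Ψ ΦInv h pD ν R_E cw cw' β₁ β₂ cH γ C₀ cl cexl cu cexu →
      ∃ C : ℝ, 1 ≤ C ∧ ∀ x y : E, x ∈ D → y ∈ D → x ≠ y →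
        C⁻¹ * (h (Φ (dist x y)) x y * psiFun ν Φ (dist x y) / vol m x (dist x y))
          ≤ (∫ s in Set.Ioi (Φ (dist x y)),
              h s x y / (s * vol m x (ΦInv s) * laplaceExp ν (s⁻¹))) ∧
        (∫ s in Set.Ioi (Φ (dist x y)),
            h s x y / (s * vol m x (ΦInv s) * laplaceExp ν (s⁻¹))) ≤
          C * (h (Φ (dist x y)) x y * psiFun ν Φ (dist x y) / vol m x (dist x y))) := by
  constructor
  · rintro ⟨hP, hDb, hR₁, hh, -, -⟩
    obtain ⟨CV, hCV, hV⟩ := hVD.exists_volDoublingBelow hRE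
      (B := ENNReal.ofReal (ΦInv (2 * Φ (diam D)) + 1)) (Or.inl ENNReal.ofReal_ne_top)
    obtain ⟨C, hC, hbound⟩ := exists_greenTail_comparable hsub.levy hcw hcw' hP hΦ0 hΦmono hΦInv
      hΦsc hcA hcA' hα₁ hα₁₂ hm hV (by linarith) hd₁ hd hh hcH hdim
    refine ⟨C, hC, fun x y hx hy hxy => ?_⟩
    have hρ := dist_pos.2 hxy
    have ha : 0 < Φ (dist x y) := hΦ0 ▸ hΦmono self_mem_Ici hρ.le hρ
    have haD : Φ (dist x y) ≤ Φ (diam D) := hΦmono.monotoneOn hρ.le diam_nonneg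
      (dist_le_diam_of_mem hDb hx hy)
    refine hbound x hx y hy hρ _ measurableSet_Ioc Ioc_subset_Ioi_self
      (Ioc_subset_Ioc_right (by linarith)) ((ENNReal.ofReal_lt_ofReal_iff (by linarith)).2
        (by linarith)) fun s hs => ⟨?_, ?_⟩
    · exact (ENNReal.ofReal_le_ofReal (by linarith [hs.2])).trans_lt hR₁
    · have hD : 0 < 2 * Φ (diam D) := by linarith [hs.1, hs.2]
      have := hΦmono.monotoneOn_rightInverse hΦInv (ha.trans hs.1) hD hs.2
      exact (ENNReal.ofReal_lt_ofReal_iff (by linarith [(hΦInv _ hD).1])).2 (by linarith)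
  · rintro ⟨hP, rfl, hh, -⟩
    obtain ⟨CV, hCV, hV⟩ := hVD.exists_volDoublingBelow hRE (B := ⊤) (Or.inr rfl)
    obtain ⟨C, hC, hbound⟩ := exists_greenTail_comparable hsub.levy hcw hcw' hP hΦ0 hΦmono hΦInv
      hΦsc hcA hcA' hα₁ hα₁₂ hm hV (by linarith) hd₁ hd hh hcH hdim
    exact ⟨C, hC, fun x y hx hy hxy => hbound x hx y hy (dist_pos.2 hxy) _ measurableSet_Ioi
      subset_rfl Ioc_subset_Ioi_self ENNReal.ofReal_lt_top
      fun _ _ => ⟨ENNReal.ofReal_lt_top, ENNReal.ofReal_lt_top⟩⟩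

/-- Lemma 5.4(i): if d₁ > α₂(β₂ ∧ 1), then the tail part G̃_D of the Green function
estimate is comparable to h(Φ(ρ(x,y)),x,y) ψ(ρ(x,y))/V(x,ρ(x,y)), under either
(Poly-R₁) + HK^h_B or (Poly-∞) + HK^h_U (the upper limit 2Φ(diam D) being ∞ for
unbounded D). -/
theorem green_tail_estimate_high_dimension
    {E : Type*} [MetricSpace E] [MeasurableSpace E] [BorelSpace E] [ProperSpace E]
    [TopologicalSpace.SeparableSpace E]
    (m : Measure E) (R_E : ℝ≥0∞) (d₁ d₂ : ℝ)
    (hm : ∀ (x : E) (r : ℝ), 0 < r → 0 < m (Metric.ball x r) ∧ m (Metric.ball x r) < ⊤)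
    (hRE : 0 < R_E) (hd₁ : 0 < d₁) (hd : d₁ ≤ d₂) (hVD : VolDoubling m R_E d₁ d₂)
    (D : Set E) (hDopen : IsOpen D) (hDne : D.Nonempty) (hDproper : D ≠ Set.univ)
    (Φ Ψ : ℝ → ℝ) (cA cA' α₁ α₂ cB cB' α₃ α₄ : ℝ)
    (hΦ0 : Φ 0 = 0) (hΦmono : StrictMonoOn Φ (Set.Ici 0))
    (hΨ0 : Ψ 0 = 0) (hΨmono : StrictMonoOn Ψ (Set.Ici 0))
    (hΦΨ : ∀ r : ℝ, 0 ≤ r → Φ r ≤ Ψ r)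
    (hcA : 0 < cA) (hcA' : 0 < cA') (hα₁ : 0 < α₁) (hα₁₂ : α₁ ≤ α₂)
    (hcB : 0 < cB) (hcB' : 0 < cB') (hα₃ : 0 < α₃) (hα₃₄ : α₃ ≤ α₄)
    (hΦsc : WeakScaling Φ cA cA' α₁ α₂) (hΨsc : WeakScaling Ψ cB cB' α₃ α₄)
    (ΦInv : ℝ → ℝ) (hΦInv : ∀ s : ℝ, 0 < s → 0 < ΦInv s ∧ Φ (ΦInv s) = s)
    (h : ℝ → E → E → ℝ) (cH γ : ℝ) (hcH : 0 < cH) (hγ : 0 ≤ γ)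
    (pD : ℝ → E → E → ℝ)
    (hpD_meas : ∀ x y : E, Measurable fun s => pD s x y)
    (hpD_nonneg : ∀ (s : ℝ) (x y : E), 0 ≤ pD s x y)
    (ν : Measure ℝ) (μ : ℝ → Measure ℝ) (hsub : IsSubordinatorLaw ν μ)
    (φInv : ℝ → ℝ) (hφInv : IsPhiInv ν φInv)
    (R₁ : ℝ≥0∞) (cw cw' β₁ β₂ : ℝ) (hR₁ : 0 < R₁)
    (hcw : 0 < cw) (hcw' : 0 < cw') (hβ₁ : 0 < β₁) (hβ : β₁ ≤ β₂)
    (C₀ cl cexl cu cexu : ℝ) (hC₀ : C₀ = 0 ∨ C₀ = 1)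
    (hcl : 0 < cl) (hcexl : 0 < cexl) (hcu : 0 < cu) (hcexu : 0 < cexu)
    (hdim : α₂ * min β₂ 1 < d₁) :
    (BddCaseHyp m D Φ Ψ ΦInv h pD ν R₁ cw cw' β₁ β₂ cH γ C₀ cl cexl cu cexu →
      ∃ C : ℝ, 1 ≤ C ∧ ∀ x y : E, x ∈ D → y ∈ D → x ≠ y →
        C⁻¹ * (h (Φ (dist x y)) x y * psiFun ν Φ (dist x y) / vol m x (dist x y))
          ≤ (∫ s in Set.Ioc (Φ (dist x y)) (2 * Φ (Metric.diam D)),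
              h s x y / (s * vol m x (ΦInv s) * laplaceExp ν (s⁻¹))) ∧
        (∫ s in Set.Ioc (Φ (dist x y)) (2 * Φ (Metric.diam D)),
            h s x y / (s * vol m x (ΦInv s) * laplaceExp ν (s⁻¹))) ≤
          C * (h (Φ (dist x y)) x y * psiFun ν Φ (dist x y) / vol m x (dist x y))) ∧
    (UnbddCaseHyp m D Ψ ΦInv h pD ν R_E cw cw' β₁ β₂ cH γ C₀ cl cexl cu cexu →
      ∃ C : ℝ, 1 ≤ C ∧ ∀ x y : E, x ∈ D → y ∈ D → x ≠ y →
        C⁻¹ * (h (Φ (dist x y)) x y * psiFun ν Φ (dist x y) / vol m x (dist x y))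
          ≤ (∫ s in Set.Ioi (Φ (dist x y)),
              h s x y / (s * vol m x (ΦInv s) * laplaceExp ν (s⁻¹))) ∧
        (∫ s in Set.Ioi (Φ (dist x y)),
            h s x y / (s * vol m x (ΦInv s) * laplaceExp ν (s⁻¹))) ≤
          C * (h (Φ (dist x y)) x y * psiFun ν Φ (dist x y) / vol m x (dist x y))) :=
  green_tail_estimate_high_dimension_general m R_E d₁ d₂ hm hRE hd₁ hd hVD D Φ Ψ cA cA' α₁ α₂ hΦ0
    hΦmono hcA hcA' hα₁ hα₁₂ hΦsc ΦInv hΦInv h cH γ hcH pD ν μ hsub R₁ cw cw' β₁ β₂ hcw hcw' C₀ cl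
    cexl cu cexu hdim
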